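/- arXiv:math/0308002 — 5 statements merged into one kernel-verified Lean document; each statement's English description precedes it below -/
import Mathlib

section
/- Define V(r) := Λ(πr + θ(r)/2) - Λ(πr - θ(r)/2), where Λ is the Lobachevsky function Λ(z) = -∫₀^z log|2 sin x| dx and θ(r) = arccos(cos(2πr) - 1/2). Then for 2/3 < r < 1, the derivative V'(r) = 2π log|2 sin(πr - θ(r)/2)|. -/
open Real

noncomputable def Lob (z : ℝ) : ℝ := -∫ x in (0 : ℝ)..z, Real.log |2 * Real.sin x|

noncomputable def theta (r : ℝ) : ℝ := Real.arccos (Real.cos (2 * π * r) - 1 / 2)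

/-! The angles `a = πr + θ/2` and `b = πr - θ/2` satisfy `a - b = θ` and `a + b = 2πr`, so
`4 sin a sin b = 2 (cos θ - cos 2πr) = -1` wherever `cos 2πr ≥ -1/2`. Hence neither sine
vanishes, `Lob' = -log |2 sin ·|` exists at `a` and `b` (the integrand is locally integrable on
all of `ℝ`), and `log |2 sin a| = -log |2 sin b|`, so in the chain rule for `Lob a - Lob b` the
two terms carrying `θ'` cancel, leaving `2π log |2 sin b|`. -/

open MeasureTheory

lemma intervalIntegrable_log_abs_two_mul_sin (a b : ℝ) :
    IntervalIntegrable (fun x => log |2 * sin x|) volume a b := by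
  simpa only [Real.norm_eq_abs] using
    ((analyticOnNhd_const.mul analyticOnNhd_sin).meromorphicOn
      (U := Set.uIcc a b)).intervalIntegrable_log_norm

lemma hasDerivAt_Lob {z : ℝ} (hz : sin z ≠ 0) : HasDerivAt Lob (-log |2 * sin z|) z := by
  have hcont : ContinuousAt (fun x => log |2 * sin x|) z :=
    (continuous_abs.comp (continuous_const.mul continuous_sin)).continuousAt.log (by simpa)
  have hmeas : Measurable fun x => log |2 * sin x| := by fun_prop
  exact (intervalIntegral.integral_hasDerivAt_right (intervalIntegrable_log_abs_two_mul_sin 0 z)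
    hmeas.stronglyMeasurable.stronglyMeasurableAtFilter hcont).neg

section theta

variable {r : ℝ}

lemma cos_theta (hr : -(1 / 2) ≤ cos (2 * π * r)) : cos (theta r) = cos (2 * π * r) - 1 / 2 :=
  cos_arccos (by linarith) (by linarith [cos_le_one (2 * π * r)])

lemma four_mul_sin_add_theta_mul_sin_sub_theta (hr : -(1 / 2) ≤ cos (2 * π * r)) :
    4 * sin (π * r + theta r / 2) * sin (π * r - theta r / 2) = -1 := by
  have h := two_mul_sin_mul_sin (π * r + theta r / 2) (π * r - theta r / 2)
  rw [show π * r + theta r / 2 - (π * r - theta r / 2) = theta r by ring,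
    show π * r + theta r / 2 + (π * r - theta r / 2) = 2 * π * r by ring, cos_theta hr] at h
  linarith

lemma log_abs_two_mul_sin_add_theta (hr : -(1 / 2) ≤ cos (2 * π * r)) :
    log |2 * sin (π * r + theta r / 2)| = -log |2 * sin (π * r - theta r / 2)| := by
  have hprod : 2 * sin (π * r + theta r / 2) * (2 * sin (π * r - theta r / 2)) = -1 := by
    linarith [four_mul_sin_add_theta_mul_sin_sub_theta hr]
  have hne : 2 * sin (π * r + theta r / 2) * (2 * sin (π * r - theta r / 2)) ≠ 0 := by
    rw [hprod]; norm_num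
  rw [eq_neg_iff_add_eq_zero, ← log_mul (abs_ne_zero.2 (left_ne_zero_of_mul hne))
    (abs_ne_zero.2 (right_ne_zero_of_mul hne)), ← abs_mul, hprod]
  simp

lemma differentiableAt_theta (hr : -(1 / 2) < cos (2 * π * r)) :
    DifferentiableAt ℝ theta r := by
  have hu : cos (2 * π * r) - 1 / 2 ≠ -1 ∧ cos (2 * π * r) - 1 / 2 ≠ 1 :=
    ⟨by linarith, by linarith [cos_le_one (2 * π * r)]⟩
  exact (differentiableAt_arccos.2 hu).comp r (by fun_prop)

lemma neg_half_lt_cos_two_pi_mul (h1 : 2 / 3 < r) (h2 : r < 1) : -(1 / 2) < cos (2 * π * r) := by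
  have hcos : cos (2 * π / 3) = -(1 / 2) := by
    rw [show 2 * π / 3 = π - π / 3 by ring, cos_pi_sub, cos_pi_div_three]
  rw [show 2 * π * r = 2 * π - 2 * π * (1 - r) by ring, cos_two_pi_sub, ← hcos]
  exact cos_lt_cos_of_nonneg_of_le_pi (by nlinarith [pi_pos]) (by linarith [pi_pos])
    (by nlinarith [pi_pos])

theorem hasDerivAt_Lob_add_theta_sub_Lob_sub_theta (hr : -(1 / 2) < cos (2 * π * r)) :
    HasDerivAt (fun s => Lob (π * s + theta s / 2) - Lob (π * s - theta s / 2))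
      (2 * π * log |2 * sin (π * r - theta r / 2)|) r := by
  obtain ⟨θ', hθ⟩ : ∃ θ', HasDerivAt theta θ' r := ⟨_, (differentiableAt_theta hr).hasDerivAt⟩
  have hprod := four_mul_sin_add_theta_mul_sin_sub_theta hr.le
  have hsin_add : sin (π * r + theta r / 2) ≠ 0 := by
    intro h; rw [h] at hprod; norm_num at hprod
  have hsin_sub : sin (π * r - theta r / 2) ≠ 0 := by
    intro h; rw [h] at hprod; norm_num at hprod
  have hπ : HasDerivAt (fun s => π * s) π r := by simpa using (hasDerivAt_id r).const_mul π
  refine (((hasDerivAt_Lob hsin_add).comp r (hπ.add (hθ.div_const 2))).sub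
    ((hasDerivAt_Lob hsin_sub).comp r (hπ.sub (hθ.div_const 2)))).congr_deriv ?_
  rw [log_abs_two_mul_sin_add_theta hr.le]
  ring

end theta

theorem stmt4 (r : ℝ) (h1 : 2 / 3 < r) (h2 : r < 1) :
    HasDerivAt (fun s => Lob (π * s + theta s / 2) - Lob (π * s - theta s / 2))
      (2 * π * Real.log |2 * Real.sin (π * r - theta r / 2)|) r :=
  hasDerivAt_Lob_add_theta_sub_Lob_sub_theta (neg_half_lt_cos_two_pi_mul h1 h2)
end

section
/- For 2/3 < r < 1, we have π/6 ≤ πr - θ(r)/2 < 5π/6, and hence sin(πr - θ(r)/2) > 1/2. -/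
open Real

lemma sin_gt_half_aux (x : ℝ) (hl : π / 6 < x) (hu : x < 5 * π / 6) :
    Real.sin x > 1 / 2 := by
  have hpi := Real.pi_pos
  rcases le_or_gt x (π / 2) with hx | hx
  · have := Real.strictMonoOn_sin (Set.mem_Icc.2 ⟨by linarith, by linarith⟩)
      (Set.mem_Icc.2 ⟨by linarith, hx⟩) hl
    rw [Real.sin_pi_div_six] at this
    linarith
  · have h : Real.sin x = Real.sin (π - x) := (Real.sin_pi_sub x).symm
    have := Real.strictMonoOn_sin (Set.mem_Icc.2 ⟨by linarith, by linarith⟩)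
      (Set.mem_Icc.2 ⟨by linarith, by linarith⟩) (show π / 6 < π - x by linarith)
    rw [Real.sin_pi_div_six] at this
    linarith

theorem stmt5 (r : ℝ) (h1 : 2 / 3 < r) (h2 : r < 1) :
    π / 6 ≤ π * r - Real.arccos (Real.cos (2 * π * r) - 1 / 2) / 2 ∧
    π * r - Real.arccos (Real.cos (2 * π * r) - 1 / 2) / 2 < 5 * π / 6 ∧
    Real.sin (π * r - Real.arccos (Real.cos (2 * π * r) - 1 / 2) / 2) > 1 / 2 := by
  have hpi := Real.pi_pos
  have hrw : Real.cos (2 * π * r) = Real.cos (2 * π * (1 - r)) := by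
    rw [show (2:ℝ) * π * (1 - r) = 2 * π - 2 * π * r by ring, Real.cos_two_pi_sub]
  have h23 : Real.cos (2 * π / 3) = -(1/2) := by
    rw [show (2:ℝ) * π / 3 = π - π / 3 by ring, Real.cos_pi_sub, Real.cos_pi_div_three]
  -- cos(2πr) > -1/2
  have hc1 : Real.cos (2 * π * r) > -(1/2) := by
    rw [hrw, ← h23]
    exact Real.cos_lt_cos_of_nonneg_of_le_pi (by nlinarith) (by linarith) (by nlinarith)
  -- cos(2πr) < 1
  have hc2 : Real.cos (2 * π * r) < 1 := by
    rw [hrw]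
    have := Real.cos_lt_cos_of_nonneg_of_le_pi (le_refl 0) (x := 0) (y := 2 * π * (1 - r))
      (by nlinarith) (by nlinarith)
    rwa [Real.cos_zero] at this
  set θ := Real.arccos (Real.cos (2 * π * r) - 1 / 2) with hθ
  have hθle : θ ≤ π := Real.arccos_le_pi _
  have hθgt : π / 3 < θ := by
    have := Real.strictAntiOn_arccos (Set.mem_Icc.2 ⟨by linarith, by linarith⟩)
      (Set.mem_Icc.2 ⟨by linarith, by linarith⟩)
      (show Real.cos (2 * π * r) - 1 / 2 < 1/2 by linarith)
    have h13 : Real.arccos (1/2) = π / 3 := by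
      rw [show (1:ℝ)/2 = Real.cos (π/3) by rw [Real.cos_pi_div_three]]
      exact Real.arccos_cos (by positivity) (by linarith)
    rw [h13] at this
    exact this
  refine ⟨by nlinarith, by nlinarith, ?_⟩
  exact sin_gt_half_aux _ (by nlinarith) (by nlinarith)
end

section
/- For 3/4 < r < 5/6 and φ(r) = arccos(cos(2πr) + 1/2), we have 7π/12 < πr - φ(r)/2 < 5π/6, and hence sin(πr - φ(r)/2) > 1/2. -/
open Real

theorem stmt9 (r : ℝ) (h1 : 3 / 4 < r) (h2 : r < 5 / 6) :
    7 * π / 12 < π * r - Real.arccos (Real.cos (2 * π * r) + 1 / 2) / 2 ∧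
    π * r - Real.arccos (Real.cos (2 * π * r) + 1 / 2) / 2 < 5 * π / 6 ∧
    Real.sin (π * r - Real.arccos (Real.cos (2 * π * r) + 1 / 2) / 2) > 1 / 2 := by
  have hπ := Real.pi_pos
  set x := 2 * π * r with hx
  have hx1 : 3 * π / 2 < x := by rw [hx]; nlinarith
  have hx2 : x < 5 * π / 3 := by rw [hx]; nlinarith
  -- bounds on 2π - x
  have hy1 : π / 3 < 2 * π - x := by linarith
  have hy2 : 2 * π - x < π / 2 := by linarith
  have hcosx : Real.cos x = Real.cos (2 * π - x) := (Real.cos_two_pi_sub x).symm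
  have hcos_pos : 0 < Real.cos x := by
    rw [hcosx]
    apply Real.cos_pos_of_mem_Ioo
    constructor <;> [linarith; linarith]
  have hcos_lt : Real.cos x < 1 / 2 := by
    rw [hcosx]
    have := Real.cos_lt_cos_of_nonneg_of_le_pi (by positivity : (0:ℝ) ≤ π / 3)
      (by linarith : 2 * π - x ≤ π) hy1
    rw [Real.cos_pi_div_three] at this
    linarith
  have hsin_gt : -1 < Real.sin x := by
    have h := Real.sin_lt_sin_of_lt_of_le_pi_div_two
      (by linarith : -(π/2) ≤ 2 * π - x) (le_refl (π/2)) hy2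
    rw [Real.sin_pi_div_two] at h
    have : Real.sin (2 * π - x) = -Real.sin x := by
      rw [Real.sin_two_pi_sub]
    linarith [this ▸ h]
  -- key: cos(x - 7π/6) < cos x + 1/2
  have hkey : Real.cos (x - 7 * π / 6) < Real.cos x + 1 / 2 := by
    have hexp : Real.cos (x - 7 * π / 6)
        = Real.cos x * Real.cos (7 * π / 6) + Real.sin x * Real.sin (7 * π / 6) := by
      rw [Real.cos_sub]
    have hc76 : Real.cos (7 * π / 6) = -(Real.sqrt 3 / 2) := by
      have : (7:ℝ) * π / 6 = π - (-(π / 6)) := by ring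
      rw [this, Real.cos_pi_sub, Real.cos_neg, Real.cos_pi_div_six]
    have hs76 : Real.sin (7 * π / 6) = -(1 / 2) := by
      have : (7:ℝ) * π / 6 = π - (-(π / 6)) := by ring
      rw [this, Real.sin_pi_sub, Real.sin_neg, Real.sin_pi_div_six]
    rw [hexp, hc76, hs76]
    have h3 : (0:ℝ) ≤ Real.sqrt 3 := Real.sqrt_nonneg 3
    nlinarith
  have harc : Real.arccos (Real.cos x + 1 / 2) < x - 7 * π / 6 := by
    have heq : Real.arccos (Real.cos (x - 7 * π / 6)) = x - 7 * π / 6 :=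
      Real.arccos_cos (by linarith) (by linarith)
    rw [← heq]
    apply Real.strictAntiOn_arccos
    · exact ⟨Real.neg_one_le_cos _, Real.cos_le_one _⟩
    · exact ⟨by linarith [Real.neg_one_le_cos x], by linarith⟩
    · exact hkey
  have harc0 : 0 ≤ Real.arccos (Real.cos x + 1 / 2) := Real.arccos_nonneg _
  have hlo : 7 * π / 12 < π * r - Real.arccos (Real.cos (2 * π * r) + 1 / 2) / 2 := by
    rw [← hx]; rw [hx] at harc; linarith
  have hhi : π * r - Real.arccos (Real.cos (2 * π * r) + 1 / 2) / 2 < 5 * π / 6 := by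
    rw [hx] at harc0; nlinarith
  refine ⟨hlo, hhi, ?_⟩
  set α := π * r - Real.arccos (Real.cos (2 * π * r) + 1 / 2) / 2 with hα
  have hsin : Real.sin α = Real.sin (π - α) := (Real.sin_pi_sub α).symm
  rw [hsin]
  have h := Real.sin_lt_sin_of_lt_of_le_pi_div_two
    (by linarith : -(π/2) ≤ π / 6) (by linarith : π - α ≤ π / 2)
    (by linarith : π / 6 < π - α)
  rw [Real.sin_pi_div_six] at h
  exact h
end

section
/- For 0 ≤ r < 1/6, lim_{N→∞} (1/N) log |J_N(E; exp(2πr√-1/N))| = 0, where J_N(E; t) = ∑_{k=0}^{N-1} ∏_{j=1}^k (t^{(N+j)/2} - t^{-(N+j)/2})(t^{(N-j)/2} - t^{-(N-j)/2}) is the colored Jones polynomial of the figure-eight knot. -/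
/-!
At `t = exp(2πr√-1/N)` the `j`-th factor of the Habiro–Le sum is `-x_j` with
`x_j = 4 sin a sin b`, `a + b = 2πr` and `a, b ∈ [0, π]`, so `0 ≤ x_j ≤ 2 - 2 cos 2πr`, which is
`< 1` for `r < 1/6`. In Horner form `J_N = 1 - x_1 (1 - x_2 (1 - ⋯))`, hence
`1 - x_1 ≤ J_N ≤ 1`: `log |J_N|` stays bounded and `log |J_N| / N → 0`.
-/

open Real

/-- The colored Jones polynomial of the figure-eight knot (Habiro–Le formula),
evaluated at `t = exp(2πr√-1/N)`. -/
noncomputable def JFigEight (r : ℝ) (N : ℕ) : ℂ :=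
  ∑ k ∈ Finset.range N, ∏ j ∈ Finset.Icc 1 k,
    ((Complex.exp ((↑(π * r * ((N : ℝ) + (j : ℝ)) / N)) * Complex.I) -
        Complex.exp (-((↑(π * r * ((N : ℝ) + (j : ℝ)) / N)) * Complex.I))) *
     (Complex.exp ((↑(π * r * ((N : ℝ) - (j : ℝ)) / N)) * Complex.I) -
        Complex.exp (-((↑(π * r * ((N : ℝ) - (j : ℝ)) / N)) * Complex.I))))

open Finset Filter Topology

section AlternatingProducts

variable {R : Type*} [CommRing R]

theorem sum_range_prod_range_neg_succ (x : ℕ → R) (n : ℕ) :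
    ∑ k ∈ range (n + 1), ∏ j ∈ range k, -x j =
      1 - x 0 * ∑ k ∈ range n, ∏ j ∈ range k, -x (j + 1) := by
  simp only [sum_range_succ', prod_range_succ', prod_range_zero, mul_sum]
  rw [add_comm, sub_eq_add_neg, ← sum_neg_distrib]
  exact congrArg _ (sum_congr rfl fun k _ => by ring)

variable [PartialOrder R] [IsOrderedRing R]

theorem sum_range_prod_range_neg_mem_Icc (x : ℕ → R) (n : ℕ)
    (hx : ∀ j < n, 0 ≤ x j ∧ x j ≤ 1) :
    ∑ k ∈ range n, ∏ j ∈ range k, -x j ∈ Set.Icc 0 1 := by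
  induction n generalizing x with
  | zero => simp
  | succ n ih =>
    obtain ⟨h0, h1⟩ := ih (fun j => x (j + 1)) fun j hj => hx (j + 1) (by omega)
    obtain ⟨hx0, hx1⟩ := hx 0 n.succ_pos
    rw [sum_range_prod_range_neg_succ]
    exact ⟨sub_nonneg.2 (mul_le_one₀ hx1 h0 h1), sub_le_self _ (mul_nonneg hx0 h0)⟩

theorem sum_range_prod_range_neg_mem_Icc_one_sub (x : ℕ → R) {n : ℕ} (hn : 0 < n)
    (hx : ∀ j < n, 0 ≤ x j ∧ x j ≤ 1) :
    ∑ k ∈ range n, ∏ j ∈ range k, -x j ∈ Set.Icc (1 - x 0) 1 := by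
  obtain ⟨n, rfl⟩ := Nat.exists_eq_add_of_lt hn
  obtain ⟨h0, h1⟩ := sum_range_prod_range_neg_mem_Icc (fun j => x (j + 1)) n
    fun j hj => hx (j + 1) (by omega)
  rw [zero_add, sum_range_prod_range_neg_succ]
  exact ⟨sub_le_sub_left (mul_le_of_le_one_right (hx 0 hn).1 h1) 1,
    sub_le_self _ (mul_nonneg (hx 0 hn).1 h0)⟩

end AlternatingProducts

theorem Complex.exp_mul_I_sub_exp_neg_mul_I (z : ℂ) :
    exp (z * I) - exp (-(z * I)) = 2 * sin z * I := by
  rw [two_sin, mul_assoc, I_mul_I, neg_mul]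
  ring

theorem Real.four_mul_sin_mul_sin_le (a b : ℝ) : 4 * sin a * sin b ≤ 2 - 2 * cos (a + b) := by
  have := two_mul_sin_mul_sin a b
  linarith [cos_le_one (a - b)]

theorem two_sub_two_cos_lt_one {θ : ℝ} (h0 : 0 ≤ θ) (h1 : θ < π / 3) : 2 - 2 * cos θ < 1 := by
  have := cos_lt_cos_of_nonneg_of_le_pi h0 (by linarith [pi_pos]) h1
  rw [cos_pi_div_three] at this
  linarith

theorem tendsto_log_div_natCast_of_mem_Icc {u : ℕ → ℝ} {c d : ℝ} (hc : 0 < c)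
    (hu : ∀ᶠ N in atTop, u N ∈ Set.Icc c d) :
    Tendsto (fun N : ℕ => log (u N) / N) atTop (𝓝 0) := by
  refine tendsto_of_tendsto_of_tendsto_of_le_of_le'
    (tendsto_const_div_atTop_nhds_zero_nat (log c))
    (tendsto_const_div_atTop_nhds_zero_nat (log d)) ?_ ?_ <;>
  filter_upwards [hu] with N ⟨hcN, hdN⟩ <;> gcongr
  exact hc.trans_le hcN

noncomputable def figEightFactor (r : ℝ) (N j : ℕ) : ℝ :=
  4 * sin (π * r * (N + j) / N) * sin (π * r * (N - j) / N)

theorem figEightFactor_le (r : ℝ) {N : ℕ} (hN : N ≠ 0) (j : ℕ) :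
    figEightFactor r N j ≤ 2 - 2 * cos (2 * π * r) := by
  have hsum : π * r * (N + j) / N + π * r * (N - j) / N = 2 * π * r := by
    field_simp
    ring
  unfold figEightFactor
  simpa only [hsum] using four_mul_sin_mul_sin_le (π * r * (N + j) / N) (π * r * (N - j) / N)

theorem figEightFactor_nonneg {r : ℝ} (h0 : 0 ≤ r) (h1 : r ≤ 1 / 2) {N j : ℕ} (hj : j ≤ N) :
    0 ≤ figEightFactor r N j := by
  have hjN : (j : ℝ) ≤ N := by exact_mod_cast hj
  have hangle : ∀ s : ℝ, 0 ≤ s → s ≤ 2 * N → 0 ≤ sin (π * r * s / N) := fun s hs0 hs1 =>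
    sin_nonneg_of_nonneg_of_le_pi (by positivity) <| by
      rcases (Nat.cast_nonneg (α := ℝ) N).eq_or_lt with hN | hN
      · simp [← hN, pi_nonneg]
      · have hrs : r * s ≤ N := by nlinarith
        rw [div_le_iff₀ hN, mul_assoc]
        exact mul_le_mul_of_nonneg_left hrs pi_nonneg
  unfold figEightFactor
  have := hangle (N + j) (by positivity) (by linarith)
  have := hangle (N - j) (by linarith) (by linarith [Nat.cast_nonneg (α := ℝ) j])
  positivity

theorem JFigEight_eq_ofReal (r : ℝ) (N : ℕ) :
    JFigEight r N = ↑(∑ k ∈ range N, ∏ j ∈ range k, -figEightFactor r N (j + 1)) := by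
  have hfactor (θ φ : ℝ) : (Complex.exp (θ * Complex.I) - Complex.exp (-(θ * Complex.I))) *
      (Complex.exp (φ * Complex.I) - Complex.exp (-(φ * Complex.I))) =
        ↑(-(4 * sin θ * sin φ)) := by
    simp only [Complex.exp_mul_I_sub_exp_neg_mul_I, ← Complex.ofReal_sin]
    push_cast
    ring_nf
    rw [Complex.I_sq]
    ring
  simp only [JFigEight, hfactor, figEightFactor, Complex.ofReal_sum, Complex.ofReal_prod]
  refine sum_congr rfl fun k _ => ?_
  rw [← Ico_add_one_right_eq_Icc, prod_Ico_eq_prod_range, Nat.add_sub_cancel]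
  simp only [add_comm 1]

theorem stmt12 (r : ℝ) (h1 : 0 ≤ r) (h2 : r < 1 / 6) :
    Filter.Tendsto (fun N : ℕ => Real.log ‖JFigEight r N‖ / N)
      Filter.atTop (nhds 0) := by
  have hC : 2 - 2 * cos (2 * π * r) < 1 :=
    two_sub_two_cos_lt_one (by positivity) (by nlinarith [pi_pos])
  refine tendsto_log_div_natCast_of_mem_Icc (d := 1) (sub_pos.2 hC) ?_
  filter_upwards [eventually_gt_atTop 0] with N hN
  have hfactor (j : ℕ) (hj : j < N) :
      0 ≤ figEightFactor r N (j + 1) ∧ figEightFactor r N (j + 1) ≤ 1 :=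
    ⟨figEightFactor_nonneg h1 (by linarith) hj, (figEightFactor_le r hN.ne' _).trans hC.le⟩
  obtain ⟨hlower, hupper⟩ := sum_range_prod_range_neg_mem_Icc_one_sub _ hN hfactor
  have hlower' := (sub_le_sub_left (figEightFactor_le r hN.ne' (0 + 1)) 1).trans hlower
  rw [JFigEight_eq_ofReal, Complex.norm_real, norm_of_nonneg (by linarith)]
  exact ⟨hlower', hupper⟩
end

section
/- Let r = q/p with p, q coprime positive integers, 5/6 < r < 1, and let N = nq be a multiple of q. Define f(k) = ∏_{j=1}^k (2cos(2πr) - 2cos(2πrj/N)). Then B := N(1-r)/r = n(p-q) is an integer, f(k) = 0 for all k ≥ B, and |∑_{k=0}^{N-1} f(k)| < N. -/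
/-!
Put `θ = 2π(1 - r)` and `B = n(p - q)`, so that `2πrB/N = θ` and `cos (2πr) = cos θ`.
The factor `2 cos (2πr) - 2 cos (2πrj/N)` therefore vanishes at `j = B`, which kills `f k` for
`k ≥ B`; for `j ≤ B` the angle `2πrj/N` lies in `[0, θ] ⊆ [0, π/3]` (as `r ≥ 5/6`), so the
factor lies in `[-1, 0]`. Hence `|f k| ≤ 1` for every `k`, and the term `f B = 0` with `B < N`
makes `|∑ f k| < N` strict.
-/

open Real Finset

lemma abs_sum_lt_card_of_abs_le_one {R ι : Type*} [Ring R] [LinearOrder R] [IsStrictOrderedRing R]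
    {s : Finset ι} {f : ι → R} (hle : ∀ i ∈ s, |f i| ≤ 1) {i₀ : ι} (hi₀ : i₀ ∈ s)
    (hzero : f i₀ = 0) : |∑ i ∈ s, f i| < #s :=
  calc |∑ i ∈ s, f i| ≤ ∑ i ∈ s, |f i| := abs_sum_le_sum_abs _ _
    _ < ∑ _ ∈ s, (1 : R) := sum_lt_sum hle ⟨i₀, hi₀, by simp [hzero]⟩
    _ = #s := by simp

lemma abs_two_mul_cos_sub_two_mul_cos_le_one {θ a : ℝ} (ha : 0 ≤ a) (haθ : a ≤ θ)
    (hθ : θ ≤ π / 3) : |2 * cos θ - 2 * cos a| ≤ 1 := by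
  have hθa : cos θ ≤ cos a := cos_le_cos_of_nonneg_of_le_pi ha (by linarith [pi_pos]) haθ
  have hθ_half : 1 / 2 ≤ cos θ :=
    cos_pi_div_three ▸ cos_le_cos_of_nonneg_of_le_pi (ha.trans haθ) (by linarith [pi_pos]) hθ
  rw [abs_le]
  constructor <;> linarith [cos_le_one a]

section Factor

variable {r N B : ℝ}

lemma two_pi_mul_mul_div_eq (hrB : r * B / N = 1 - r) : 2 * π * r * B / N = 2 * π * (1 - r) := by
  rw [← hrB]
  ring

lemma cos_two_pi_mul_mul_div_eq (hrB : r * B / N = 1 - r) :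
    cos (2 * π * r * B / N) = cos (2 * π * r) := by
  rw [two_pi_mul_mul_div_eq hrB, ← cos_two_pi_sub]
  ring_nf

lemma two_mul_cos_sub_two_mul_cos_div_eq_zero (hrB : r * B / N = 1 - r) :
    2 * cos (2 * π * r) - 2 * cos (2 * π * r * B / N) = 0 := by
  rw [cos_two_pi_mul_mul_div_eq hrB, sub_self]

lemma abs_two_mul_cos_sub_two_mul_cos_div_le_one (hr : 5 / 6 ≤ r) (hN : 0 < N)
    (hrB : r * B / N = 1 - r) {x : ℝ} (hx₀ : 0 ≤ x) (hxB : x ≤ B) :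
    |2 * cos (2 * π * r) - 2 * cos (2 * π * r * x / N)| ≤ 1 := by
  have := pi_pos
  have : 0 < r := by linarith
  rw [← cos_two_pi_mul_mul_div_eq hrB, two_pi_mul_mul_div_eq hrB]
  apply abs_two_mul_cos_sub_two_mul_cos_le_one
  · positivity
  · rw [← two_pi_mul_mul_div_eq hrB]
    gcongr
  · nlinarith

end Factor

theorem stmt16_general (p q : ℕ) (hp : 0 < p) (hq : 0 < q)
    (r : ℝ) (hr : r = (q : ℝ) / p) (h1 : 5 / 6 < r) (h2 : r < 1)
    (n : ℕ) (hn : 0 < n) (N : ℕ) (hN : N = n * q)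
    (f : ℕ → ℝ)
    (hf : ∀ k, f k = ∏ j ∈ Finset.Icc 1 k, (2 * Real.cos (2 * π * r) - 2 * Real.cos (2 * π * r * j / N))) :
    (N : ℝ) * (1 - r) / r = (n * (p - q) : ℕ) ∧
    (∀ k : ℕ, n * (p - q) ≤ k → f k = 0) ∧
    |∑ k ∈ Finset.range N, f k| < N := by
  have hp' : (0 : ℝ) < p := by exact_mod_cast hp
  have hqp : q < p := by exact_mod_cast (div_lt_one hp').1 (hr ▸ h2)
  have hpq : p < 2 * q := by
    have : (p : ℝ) < 2 * q := by rw [hr, lt_div_iff₀ hp'] at h1; linarith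
    exact_mod_cast this
  set B := n * (p - q)
  have hB_pos : 1 ≤ B := Nat.mul_pos hn (by omega)
  have hBN : B < N := hN ▸ Nat.mul_lt_mul_of_pos_left (by omega) hn
  have hN_cast : (N : ℝ) = n * q := by rw [hN]; push_cast; ring
  have hN_pos : (0 : ℝ) < N := by rw [hN_cast]; positivity
  have hB_cast : (B : ℝ) = n * (p - q) := by push_cast [B, Nat.cast_sub hqp.le]; ring
  have hrB : r * B / N = 1 - r := by rw [hr, hB_cast, hN_cast]; field_simp
  have hfB : ∀ k, B ≤ k → f k = 0 := fun k hk => (hf k).trans <|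
    prod_eq_zero (mem_Icc.2 ⟨hB_pos, hk⟩) (two_mul_cos_sub_two_mul_cos_div_eq_zero hrB)
  have hf_le : ∀ k, |f k| ≤ 1 := by
    intro k
    rcases lt_or_ge k B with hk | hk
    · rw [hf, abs_prod]
      refine prod_le_one (fun _ _ => abs_nonneg _) fun j hj => ?_
      have hjB : (j : ℝ) ≤ B := by exact_mod_cast ((mem_Icc.1 hj).2.trans hk.le)
      exact abs_two_mul_cos_sub_two_mul_cos_div_le_one h1.le hN_pos hrB j.cast_nonneg hjB
    · simp [hfB k hk]
  refine ⟨?_, hfB, ?_⟩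
  · rw [← hrB]
    field_simp [(by linarith : r ≠ 0)]
  · simpa using abs_sum_lt_card_of_abs_le_one (fun k _ => hf_le k) (mem_range.2 hBN) (hfB B le_rfl)

theorem stmt16 (p q : ℕ) (hp : 0 < p) (hq : 0 < q) (hcop : Nat.Coprime p q)
    (r : ℝ) (hr : r = (q : ℝ) / p) (h1 : 5 / 6 < r) (h2 : r < 1)
    (n : ℕ) (hn : 0 < n) (N : ℕ) (hN : N = n * q)
    (f : ℕ → ℝ)
    (hf : ∀ k, f k = ∏ j ∈ Finset.Icc 1 k, (2 * Real.cos (2 * π * r) - 2 * Real.cos (2 * π * r * j / N))) :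
    (N : ℝ) * (1 - r) / r = (n * (p - q) : ℕ) ∧
    (∀ k : ℕ, n * (p - q) ≤ k → f k = 0) ∧
    |∑ k ∈ Finset.range N, f k| < N :=
  stmt16_general p q hp hq r hr h1 h2 n hn N hN f hf
end
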